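/- Let G be a long-refinement graph with degree set {1, 3} having exactly one vertex v₁ of degree 1, and let v₂ be its unique neighbour. Then the induced subgraph G' = G[V(G) \ {v₁}] is a long-refinement graph with degree set {2, 3} in which v₂ is the unique vertex of degree 2. -/

import Mathlib

variable {V : Type*}

/-- Colour Refinement equivalence: `crRel G i u v` means `u` and `v` get the same colour
after `i` iterations of Colour Refinement on `G` (starting monochromatic). -/
def crRel (G : SimpleGraph V) : ℕ → V → V → Prop
  | 0 => fun _ _ => True
  | (i+1) => fun u v => crRel G i u v ∧ ∀ w : V,
      Nat.card {x : V // G.Adj u x ∧ crRel G i x w} =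
      Nat.card {x : V // G.Adj v x ∧ crRel G i x w}

/-- The colour class of `v` after `i` iterations. -/
def crClass (G : SimpleGraph V) (i : ℕ) (v : V) : Set V :=
  {u : V | crRel G i u v}

/-- The partition `π^i` induced by the colouring after `i` iterations. -/
def crPartition (G : SimpleGraph V) (i : ℕ) : Set (Set V) :=
  {C : Set V | ∃ v : V, C = crClass G i v}

/-- `G` is a long-refinement graph: Colour Refinement takes exactly `n - 1` iterations
to stabilise. -/
def IsLongRefinement [Fintype V] (G : SimpleGraph V) : Prop :=
  (∀ i < Fintype.card V - 1, crPartition G (i+1) ≠ crPartition G i) ∧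
  crPartition G (Fintype.card V) = crPartition G (Fintype.card V - 1)

/-- The degree of a vertex. -/
noncomputable def vdeg (G : SimpleGraph V) (v : V) : ℕ :=
  Nat.card {u : V // G.Adj v u}

/-- `degOn G C C' k` : every vertex of `C` has exactly `k` neighbours in `C'`,
i.e. `deg_{C'}(C) = k`. -/
def degOn (G : SimpleGraph V) (C C' : Set V) (k : ℕ) : Prop :=
  ∀ v ∈ C, Nat.card {x : V // x ∈ C' ∧ G.Adj v x} = k

/-- `C` is balanced with respect to `C'`: `deg_{C'}(C)` is defined. -/
def BalancedWrt (G : SimpleGraph V) (C C' : Set V) : Prop :=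
  ∃ k, degOn G C C' k

theorem crRel_refl (G : SimpleGraph V) : ∀ i (v : V), crRel G i v v := by
  intro i v
  induction i with
  | zero => trivial
  | succ i ih => exact ⟨ih, fun w => rfl⟩

theorem crRel_symm (G : SimpleGraph V) : ∀ i (u v : V), crRel G i u v → crRel G i v u := by
  intro i
  induction i with
  | zero => intro u v _; trivial
  | succ i ih => rintro u v ⟨h1, h2⟩; exact ⟨ih u v h1, fun w => (h2 w).symm⟩

theorem crRel_trans (G : SimpleGraph V) : ∀ i (u v w : V), crRel G i u v → crRel G i v w → crRel G i u w := by
  intro i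
  induction i with
  | zero => intros; trivial
  | succ i ih => rintro u v w ⟨h1, h2⟩ ⟨h3, h4⟩; exact ⟨ih u v w h1 h3, fun z => (h2 z).trans (h4 z)⟩

theorem crRel_succ_imp (G : SimpleGraph V) (i : ℕ) (u v : V) (h : crRel G (i+1) u v) : crRel G i u v := h.1


theorem crRel_mono (G : SimpleGraph V) {j i : ℕ} (hij : i ≤ j) (u v : V) (h : crRel G j u v) : crRel G i u v := by
  induction j with
  | zero => obtain rfl : i = 0 := Nat.le_zero.mp hij; trivial
  | succ j ih =>
    rcases Nat.eq_or_lt_of_le hij with rfl | hlt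
    · exact h
    · exact ih (Nat.lt_succ_iff.mp hlt) h.1

theorem crRel_zero (G : SimpleGraph V) (u v : V) : crRel G 0 u v := trivial

theorem crRel_one_iff (G : SimpleGraph V) (u v : V) :
    crRel G 1 u v ↔ vdeg G u = vdeg G v := by
  constructor
  · rintro ⟨-, h2⟩
    have := h2 u
    simpa [vdeg, Nat.card_congr (Equiv.subtypeEquivRight (fun x => by
      show G.Adj u x ∧ crRel G 0 x u ↔ G.Adj u x; simp [crRel])),
      Nat.card_congr (Equiv.subtypeEquivRight (fun x => by
      show G.Adj v x ∧ crRel G 0 x u ↔ G.Adj v x; simp [crRel]))] using this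
  · intro h
    refine ⟨trivial, fun w => ?_⟩
    have e1 : Nat.card {x : V // G.Adj u x ∧ crRel G 0 x w} = vdeg G u :=
      Nat.card_congr (Equiv.subtypeEquivRight (fun x => by simp [crRel]))
    have e2 : Nat.card {x : V // G.Adj v x ∧ crRel G 0 x w} = vdeg G v :=
      Nat.card_congr (Equiv.subtypeEquivRight (fun x => by simp [crRel]))
    rw [e1, e2, h]
theorem crPartition_eq_iff (G : SimpleGraph V) (i j : ℕ) :
    crPartition G i = crPartition G j ↔ ∀ u v, (crRel G i u v ↔ crRel G j u v) := by
  constructor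
  · intro hp u v
    have key : ∀ (a b : ℕ), crPartition G a = crPartition G b →
        crRel G a u v → crRel G b u v := by
      intro a b hab hr
      have hmem : crClass G a v ∈ crPartition G a := ⟨v, rfl⟩
      rw [hab] at hmem
      obtain ⟨w, hw⟩ := hmem
      have hu : u ∈ crClass G b w := hw ▸ hr
      have hv : v ∈ crClass G b w := hw ▸ crRel_refl G a v
      exact crRel_trans G b u w v hu (crRel_symm G b v w hv)
    exact ⟨key i j hp, key j i hp.symm⟩
  · intro hr
    have hcl : ∀ v, crClass G i v = crClass G j v := by
      intro v; ext u; exact hr u v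
    ext C
    constructor
    · rintro ⟨v, rfl⟩; exact ⟨v, (hcl v).symm ▸ rfl⟩
    · rintro ⟨v, rfl⟩; exact ⟨v, (hcl v).symm⟩
section Main
set_option linter.unusedSectionVars false
set_option linter.unusedVariables false
variable [Fintype V] [DecidableEq V] {G : SimpleGraph V} {v₁ v₂ : V}

theorem card_subtype_subtype (a : V) (p : V → Prop) :
    Nat.card {x : {v : V // v ≠ v₁} // p x.val} = Nat.card {x : V // x ≠ v₁ ∧ p x} :=
  Nat.card_congr (Equiv.subtypeSubtypeEquivSubtypeInter _ _)

theorem vdeg_of_ne (hdeg : Set.range (vdeg G) = ({1, 3} : Set ℕ))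
    (huniq : ∀ v, vdeg G v = 1 ↔ v = v₁) {v : V} (hv : v ≠ v₁) : vdeg G v = 3 := by
  have : vdeg G v ∈ ({1, 3} : Set ℕ) := hdeg ▸ Set.mem_range_self v
  rcases this with h | h
  · exact absurd ((huniq v).mp h) hv
  · exact h

theorem adj_v₁_iff (huniq : ∀ v, vdeg G v = 1 ↔ v = v₁) (hadj : G.Adj v₁ v₂)
    (x : V) : G.Adj v₁ x ↔ x = v₂ := by
  have h1 : vdeg G v₁ = 1 := (huniq v₁).mpr rfl
  have hs : Subsingleton {u : V // G.Adj v₁ u} := ((Nat.card_eq_one_iff_unique).mp h1).1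
  constructor
  · intro hx
    have := hs.elim ⟨x, hx⟩ ⟨v₂, hadj⟩
    exact congrArg Subtype.val this
  · rintro rfl; exact hadj

theorem vdeg_comap (hdeg : Set.range (vdeg G) = ({1, 3} : Set ℕ))
    (huniq : ∀ v, vdeg G v = 1 ↔ v = v₁) (hadj : G.Adj v₁ v₂)
    (v : {v : V // v ≠ v₁}) :
    vdeg (SimpleGraph.comap (Subtype.val : {v : V // v ≠ v₁} → V) G) v =
      if v.val = v₂ then 2 else 3 := by
  have hne : v₁ ≠ v₂ := hadj.ne
  have hbase : vdeg (SimpleGraph.comap (Subtype.val : {v : V // v ≠ v₁} → V) G) v =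
      Nat.card {x : V // x ≠ v₁ ∧ G.Adj v.val x} := card_subtype_subtype v.val _
  by_cases hv2 : v.val = v₂
  · rw [hbase, if_pos hv2]
    have hS : ({x : V | x ≠ v₁ ∧ G.Adj v.val x} : Set V) = {x : V | G.Adj v.val x} \ {v₁} := by
      ext x; simp [and_comm]
    have h3 : vdeg G v.val = 3 := vdeg_of_ne hdeg huniq v.prop
    have hc : Nat.card {x : V // x ≠ v₁ ∧ G.Adj v.val x} =
        ({x : V | G.Adj v.val x} \ {v₁} : Set V).ncard := by
      rw [← Nat.card_coe_set_eq, ← hS]; rfl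
    rw [hc, Set.ncard_diff_singleton_of_mem (show v₁ ∈ ({x : V | G.Adj v.val x} : Set V) by rw [Set.mem_setOf_eq, hv2]; exact hadj.symm)]
    have : ({x : V | G.Adj v.val x} : Set V).ncard = 3 := by
      rw [← Nat.card_coe_set_eq]; exact h3
    omega
  · rw [hbase, if_neg hv2]
    have hnadj : ¬ G.Adj v.val v₁ := by
      intro hx
      exact hv2 ((adj_v₁_iff huniq hadj v.val).mp hx.symm)
    have : Nat.card {x : V // x ≠ v₁ ∧ G.Adj v.val x} = vdeg G v.val :=
      Nat.card_congr (Equiv.subtypeEquivRight (fun x => by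
        constructor
        · exact fun h => h.2
        · intro h; exact ⟨fun he => hnadj (he ▸ h), h⟩))
    rw [this]; exact vdeg_of_ne hdeg huniq v.prop

theorem exists_w (hdeg : Set.range (vdeg G) = ({1, 3} : Set ℕ))
    (huniq : ∀ v, vdeg G v = 1 ↔ v = v₁) (hadj : G.Adj v₁ v₂) :
    ∃ w : V, G.Adj v₂ w ∧ w ≠ v₁ := by
  by_contra hcon
  push_neg at hcon
  have h3 : vdeg G v₂ = 3 := vdeg_of_ne hdeg huniq hadj.ne'
  have hs : Subsingleton {u : V // G.Adj v₂ u} :=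
    ⟨fun a b => Subtype.ext ((hcon a a.prop).trans (hcon b b.prop).symm)⟩
  rcases isEmpty_or_nonempty {u : V // G.Adj v₂ u} with he | hn
  · rw [vdeg, Nat.card_of_isEmpty] at h3; omega
  · have : Nat.card {u : V // G.Adj v₂ u} = 1 := Nat.card_eq_one_iff_unique.mpr ⟨hs, hn⟩
    rw [vdeg] at h3; omega
theorem crRel_v₁_iff (hdeg : Set.range (vdeg G) = ({1, 3} : Set ℕ))
    (huniq : ∀ v, vdeg G v = 1 ↔ v = v₁) (i : ℕ) (x : V) :
    crRel G (i+1) x v₁ ↔ x = v₁ := by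
  constructor
  · intro hx
    have h1 : crRel G 1 x v₁ := crRel_mono G (Nat.succ_le_succ (Nat.zero_le i)) x v₁ hx
    have := (crRel_one_iff G x v₁).mp h1
    rw [(huniq v₁).mpr rfl] at this
    exact (huniq x).mp this
  · rintro rfl; exact crRel_refl G _ _

theorem count_cr_eq (hdeg : Set.range (vdeg G) = ({1, 3} : Set ℕ))
    (huniq : ∀ v, vdeg G v = 1 ↔ v = v₁) (i : ℕ) (u : V) :
    Nat.card {x : V // G.Adj u x ∧ crRel G (i+1) x v₁} =
      Nat.card {x : V // G.Adj u x ∧ x = v₁} :=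
  Nat.card_congr (Equiv.subtypeEquivRight (fun x =>
    and_congr_right (fun _ => crRel_v₁_iff hdeg huniq i x)))

theorem count_v₁_adj (hdeg : Set.range (vdeg G) = ({1, 3} : Set ℕ))
    (huniq : ∀ v, vdeg G v = 1 ↔ v = v₁) (i : ℕ) {u : V} (h : G.Adj u v₁) :
    Nat.card {x : V // G.Adj u x ∧ crRel G (i+1) x v₁} = 1 := by
  rw [count_cr_eq hdeg huniq i u]
  exact Nat.card_eq_one_iff_unique.mpr
    ⟨⟨fun a b => Subtype.ext (a.prop.2.trans b.prop.2.symm)⟩, ⟨v₁, h, rfl⟩⟩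

theorem count_v₁_not_adj (hdeg : Set.range (vdeg G) = ({1, 3} : Set ℕ))
    (huniq : ∀ v, vdeg G v = 1 ↔ v = v₁) (i : ℕ) {u : V} (h : ¬ G.Adj u v₁) :
    Nat.card {x : V // G.Adj u x ∧ crRel G (i+1) x v₁} = 0 := by
  rw [count_cr_eq hdeg huniq i u]
  have : IsEmpty {x : V // G.Adj u x ∧ x = v₁} := ⟨fun x => h (x.prop.2 ▸ x.prop.1)⟩
  exact Nat.card_of_isEmpty

theorem crRel_key (hdeg : Set.range (vdeg G) = ({1, 3} : Set ℕ))
    (huniq : ∀ v, vdeg G v = 1 ↔ v = v₁) (hadj : G.Adj v₁ v₂) :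
    ∀ i (u v : {v : V // v ≠ v₁}),
      crRel G (i+1) u.val v.val ↔
      crRel (SimpleGraph.comap (Subtype.val : {v : V // v ≠ v₁} → V) G) i u v := by
  intro i
  induction i with
  | zero =>
    intro u v
    constructor
    · intro _; exact trivial
    · intro _
      exact (crRel_one_iff G u.val v.val).mpr
        (by rw [vdeg_of_ne hdeg huniq u.prop, vdeg_of_ne hdeg huniq v.prop])
  | succ i ih =>
    intro u v
    set G' := SimpleGraph.comap (Subtype.val : {v : V // v ≠ v₁} → V) G with hG'
    have cnt_eq : ∀ (a : {v : V // v ≠ v₁}) (w : {v : V // v ≠ v₁}),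
        Nat.card {x : V // G.Adj a.val x ∧ crRel G (i+1) x w.val} =
        Nat.card {x : {v : V // v ≠ v₁} // G'.Adj a x ∧ crRel G' i x w} := by
      intro a w
      refine Nat.card_congr ⟨?_, ?_, ?_, ?_⟩
      · rintro ⟨x, hx1, hx2⟩
        have hxne : x ≠ v₁ := by
          intro hxe
          apply w.prop
          apply (crRel_v₁_iff hdeg huniq i w.val).mp
          apply crRel_symm
          exact hxe ▸ hx2
        exact ⟨⟨x, hxne⟩, hx1, (ih ⟨x, hxne⟩ w).mp hx2⟩
      · rintro ⟨x, hx1, hx2⟩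
        exact ⟨x.val, hx1, (ih x w).mpr hx2⟩
      · rintro ⟨x, hx1, hx2⟩; rfl
      · rintro ⟨x, hx1, hx2⟩; rfl
    constructor
    · rintro ⟨h1, h2⟩
      refine ⟨(ih u v).mp h1, fun w => ?_⟩
      rw [← cnt_eq u w, ← cnt_eq v w]
      exact h2 w.val
    · rintro ⟨h1, h2⟩
      refine ⟨(ih u v).mpr h1, fun w => ?_⟩
      by_cases hw : w = v₁
      · rw [hw]
        have hdegeq : vdeg G' u = vdeg G' v := by
          have hrel1 : crRel G' 1 u v :=
            crRel_mono G' (Nat.succ_le_succ (Nat.zero_le i)) u v ⟨h1, h2⟩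
          exact (crRel_one_iff G' u v).mp hrel1
        rw [vdeg_comap hdeg huniq hadj u, vdeg_comap hdeg huniq hadj v] at hdegeq
        have hiff : (u.val = v₂) ↔ (v.val = v₂) := by
          constructor <;> intro hh <;> by_contra hc <;> simp [hh, hc] at hdegeq
        have hu' : G.Adj u.val v₁ ↔ u.val = v₂ := by
          rw [← adj_v₁_iff huniq hadj u.val]; exact ⟨fun h => h.symm, fun h => h.symm⟩
        have hv' : G.Adj v.val v₁ ↔ v.val = v₂ := by
          rw [← adj_v₁_iff huniq hadj v.val]; exact ⟨fun h => h.symm, fun h => h.symm⟩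
        by_cases hu2 : u.val = v₂
        · rw [count_v₁_adj hdeg huniq i (hu'.mpr hu2),
            count_v₁_adj hdeg huniq i (hv'.mpr (hiff.mp hu2))]
        · rw [count_v₁_not_adj hdeg huniq i (fun hc => hu2 (hu'.mp hc)),
            count_v₁_not_adj hdeg huniq i (fun hc => hu2 (hiff.mpr (hv'.mp hc)))]
      · rw [cnt_eq u ⟨w, hw⟩, cnt_eq v ⟨w, hw⟩]
        exact h2 ⟨w, hw⟩
theorem crRel_v₁_iff' (hdeg : Set.range (vdeg G) = ({1, 3} : Set ℕ))
    (huniq : ∀ v, vdeg G v = 1 ↔ v = v₁) (i : ℕ) (x : V) :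
    crRel G (i+1) v₁ x ↔ x = v₁ := by
  rw [← crRel_v₁_iff hdeg huniq i x]
  exact ⟨crRel_symm G (i+1) v₁ x, crRel_symm G (i+1) x v₁⟩

theorem partition_step (hdeg : Set.range (vdeg G) = ({1, 3} : Set ℕ))
    (huniq : ∀ v, vdeg G v = 1 ↔ v = v₁) (hadj : G.Adj v₁ v₂) (i : ℕ) :
    crPartition G (i+2) = crPartition G (i+1) ↔
      crPartition (SimpleGraph.comap (Subtype.val : {v : V // v ≠ v₁} → V) G) (i+1) =
      crPartition (SimpleGraph.comap (Subtype.val : {v : V // v ≠ v₁} → V) G) i := by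
  set G' := SimpleGraph.comap (Subtype.val : {v : V // v ≠ v₁} → V) G with hG'
  rw [crPartition_eq_iff, crPartition_eq_iff]
  constructor
  · intro hG u v
    rw [← crRel_key hdeg huniq hadj (i+1) u v, ← crRel_key hdeg huniq hadj i u v]
    exact hG u.val v.val
  · intro hGp u v
    by_cases hu : u = v₁
    · subst hu
      rw [crRel_v₁_iff' hdeg huniq (i+1) v, crRel_v₁_iff' hdeg huniq i v]
    · by_cases hv : v = v₁
      · subst hv
        rw [crRel_v₁_iff hdeg huniq (i+1) u, crRel_v₁_iff hdeg huniq i u]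
      · rw [crRel_key hdeg huniq hadj (i+1) ⟨u, hu⟩ ⟨v, hv⟩,
          crRel_key hdeg huniq hadj i ⟨u, hu⟩ ⟨v, hv⟩]
        exact hGp ⟨u, hu⟩ ⟨v, hv⟩

end Main

/-- If `G` is a long-refinement graph with degree set `{1,3}` and a unique
degree-1 vertex `v₁` with neighbour `v₂`, then the induced subgraph on
`V(G) \\ {v₁}` is a long-refinement graph with degree set `{2,3}` whose unique
degree-2 vertex is `v₂`. -/
theorem longRefinement_delete_pendant [Fintype V] [DecidableEq V]
    (G : SimpleGraph V) (h : IsLongRefinement G)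
    (hdeg : Set.range (vdeg G) = ({1, 3} : Set ℕ))
    (v₁ v₂ : V) (huniq : ∀ v, vdeg G v = 1 ↔ v = v₁)
    (hadj : G.Adj v₁ v₂) :
    IsLongRefinement (SimpleGraph.comap (Subtype.val : {v : V // v ≠ v₁} → V) G) ∧
    Set.range (vdeg (SimpleGraph.comap (Subtype.val : {v : V // v ≠ v₁} → V) G)) =
      ({2, 3} : Set ℕ) ∧
    ∀ v : {v : V // v ≠ v₁},
      vdeg (SimpleGraph.comap (Subtype.val : {v : V // v ≠ v₁} → V) G) v = 2 ↔
        (v : V) = v₂ := by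
  set G' := SimpleGraph.comap (Subtype.val : {v : V // v ≠ v₁} → V) G with hG'
  set n := Fintype.card V with hn
  have hn2 : 2 ≤ n := Fintype.one_lt_card_iff_nontrivial.mpr ⟨⟨v₁, v₂, hadj.ne⟩⟩
  have hm : Fintype.card {v : V // v ≠ v₁} = n - 1 := by
    rw [Fintype.card_subtype_compl, Fintype.card_subtype_eq]
  have hdeg' : ∀ v : {v : V // v ≠ v₁}, vdeg G' v = if v.val = v₂ then 2 else 3 :=
    vdeg_comap hdeg huniq hadj
  refine ⟨⟨?_, ?_⟩, ?_, ?_⟩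
  · -- ∀ i < card V' - 1, π'(i+1) ≠ π' i
    intro j hj
    rw [hm] at hj
    match j with
    | 0 =>
      have h1m : 1 < Fintype.card {v : V // v ≠ v₁} := by rw [hm]; omega
      obtain ⟨u, hu⟩ := Fintype.exists_ne_of_one_lt_card h1m ⟨v₂, hadj.ne'⟩
      intro heq
      have := (crPartition_eq_iff G' 1 0).mp heq u ⟨v₂, hadj.ne'⟩
      have hrel : crRel G' 1 u ⟨v₂, hadj.ne'⟩ := this.mpr trivial
      have hdd := (crRel_one_iff G' u ⟨v₂, hadj.ne'⟩).mp hrel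
      rw [hdeg' u, hdeg' ⟨v₂, hadj.ne'⟩] at hdd
      have huv : u.val ≠ v₂ := fun hc => hu (Subtype.ext hc)
      simp [huv] at hdd
    | (k+1) =>
      have hstep := partition_step hdeg huniq hadj (k+1)
      have hGne := h.1 (k+2) (by omega)
      intro heq
      exact hGne (hstep.mpr heq)
  · -- π' (card V') = π' (card V' - 1)
    have e1 : n - 2 + 2 = n := by omega
    have e2 : n - 2 + 1 = n - 1 := by omega
    have hGeq : crPartition G (n - 2 + 2) = crPartition G (n - 2 + 1) := by
      rw [e1, e2]; exact h.2
    have key := (partition_step hdeg huniq hadj (n - 2)).mp hGeq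
    have e3 : Fintype.card {v : V // v ≠ v₁} = n - 2 + 1 := by rw [hm]; omega
    have e4 : Fintype.card {v : V // v ≠ v₁} - 1 = n - 2 := by rw [hm]; omega
    rw [e4, e3]
    exact key
  · -- range of degrees
    ext k
    constructor
    · rintro ⟨v, rfl⟩
      rw [hdeg' v]
      split_ifs
      · exact Or.inl rfl
      · exact Or.inr rfl
    · rintro (rfl | rfl)
      · exact ⟨⟨v₂, hadj.ne'⟩, by rw [hdeg']; simp⟩
      · obtain ⟨w, hw1, hw2⟩ := exists_w hdeg huniq hadj
        exact ⟨⟨w, hw2⟩, by rw [hdeg']; simp [hw1.ne']⟩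
  · -- uniqueness of degree 2
    intro v
    rw [hdeg' v]
    by_cases hv : v.val = v₂ <;> simp [hv]
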